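/- Let M be an n-dimensional Riemannian manifold with Ricci tensor ρ and scalar curvature τ. If there is a constant c ≠ -2/(n+2) such that (∇_X ρ)(X,X) + c·(∇_X τ)·‖X‖² = 0 for all vector fields X, then (∇_X ρ)(X,X) = 0 for all X and τ is constant (i.e., ∇τ = 0). -/

import Mathlib

/-! Polarizing the cubic identity `(∇_X ρ)(X,X) = -c (∇_X τ) ‖X‖²` in the direction `Y` and
tracing over an orthonormal basis `Y = eᵢ` turns every term into a multiple of `∇_X τ`: the
three traces of `∇ρ` give `∇_X τ + ½ ∇_X τ + ½ ∇_X τ` by the Bianchi identity and `τ = tr ρ`,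
and the metric terms give `c (n + 2) ∇_X τ`. Hence `(2 + c (n + 2)) ∇τ = 0`, so `∇τ = 0`
unless `c = -2/(n+2)`, and then `(∇_X ρ)(X,X) = 0` as well. -/

open Finset

section

variable {V : Type*} [NormedAddCommGroup V] [InnerProductSpace ℝ V]

/-- The derivative at `Y` in the direction `X` of the cubic form `T X X X + c f(X) ‖X‖²`. -/
theorem polarization_eq_zero_of_cubic_eq_zero (T : V →ₗ[ℝ] V →ₗ[ℝ] V →ₗ[ℝ] ℝ) (f : V →ₗ[ℝ] ℝ)
    (c : ℝ) (h : ∀ X : V, T X X X + c * f X * ‖X‖ ^ 2 = 0) (X Y : V) :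
    T X Y Y + T Y X Y + T Y Y X + c * (f X * ‖Y‖ ^ 2 + 2 * f Y * inner ℝ X Y) = 0 := by
  have hadd := h (Y + X)
  have hsub := h (Y - X)
  simp only [map_add, map_sub, LinearMap.add_apply, LinearMap.sub_apply, norm_add_sq_real,
    norm_sub_sq_real, real_inner_comm X Y] at hadd hsub
  linear_combination (hadd - hsub - 2 * h X) / 2

theorem OrthonormalBasis.sum_apply_mul_inner {ι : Type*} [Fintype ι]
    (b : OrthonormalBasis ι ℝ V) (f : V →ₗ[ℝ] ℝ) (X : V) :
    ∑ i, f (b i) * inner ℝ X (b i) = f X := by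
  conv_rhs => rw [← b.sum_repr' X]
  simp only [map_sum, map_smul, smul_eq_mul, real_inner_comm X, mul_comm]

theorem two_add_mul_mul_eq_zero_of_cubic_eq_zero {n : ℕ} (b : OrthonormalBasis (Fin n) ℝ V)
    (T : V →ₗ[ℝ] V →ₗ[ℝ] V →ₗ[ℝ] ℝ) (dτ : V →ₗ[ℝ] ℝ)
    (hsymm : ∀ X Y Z : V, T X Y Z = T X Z Y)
    (hdiv : ∀ X : V, 2 * ∑ i, T (b i) (b i) X = dτ X)
    (htr : ∀ X : V, ∑ i, T X (b i) (b i) = dτ X)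
    (c : ℝ) (h : ∀ X : V, T X X X + c * dτ X * ‖X‖ ^ 2 = 0) (X : V) :
    (2 + c * (n + 2)) * dτ X = 0 := by
  have htraced : ∑ i, (T X (b i) (b i) + T (b i) X (b i) + T (b i) (b i) X
      + c * (dτ X * ‖b i‖ ^ 2 + 2 * dτ (b i) * inner ℝ X (b i))) = 0 :=
    sum_eq_zero fun i _ => polarization_eq_zero_of_cubic_eq_zero T dτ c h X (b i)
  have hmid : ∑ i, T (b i) X (b i) = ∑ i, T (b i) (b i) X :=
    sum_congr rfl fun i _ => hsymm (b i) X (b i)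
  have hmetric : ∑ i, c * (dτ X * ‖b i‖ ^ 2 + 2 * dτ (b i) * inner ℝ X (b i))
      = c * (n + 2) * dτ X := by
    simp only [b.norm_eq_one, one_pow, mul_one, mul_add, sum_add_distrib, ← mul_sum, mul_assoc,
      b.sum_apply_mul_inner, sum_const, card_univ, Fintype.card_fin, nsmul_eq_mul]
    ring
  simp only [sum_add_distrib, hmid, hmetric, htr] at htraced
  linear_combination htraced - hdiv X

end

theorem cyclic_parallel_of_linear_combination_general
    {V : Type*} [NormedAddCommGroup V] [InnerProductSpace ℝ V]
    {n : ℕ}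
    (b : OrthonormalBasis (Fin n) ℝ V)
    (T : V →ₗ[ℝ] V →ₗ[ℝ] V →ₗ[ℝ] ℝ) (dτ : V →ₗ[ℝ] ℝ)
    (hsymm : ∀ X Y Z : V, T X Y Z = T X Z Y)
    (hdiv : ∀ X : V, 2 * ∑ i, T (b i) (b i) X = dτ X)
    (htr : ∀ X : V, ∑ i, T X (b i) (b i) = dτ X)
    (c : ℝ) (hc : c ≠ -2 / ((n : ℝ) + 2))
    (h : ∀ X : V, T X X X + c * dτ X * ‖X‖ ^ 2 = 0) :
    (∀ X : V, T X X X = 0) ∧ dτ = 0 := by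
  have hcoef : 2 + c * (n + 2) ≠ 0 := by
    contrapose! hc
    rw [eq_div_iff (by positivity)]
    linarith
  have hdτ : dτ = 0 := LinearMap.ext fun X =>
    (mul_eq_zero.mp
      (two_add_mul_mul_eq_zero_of_cubic_eq_zero b T dτ hsymm hdiv htr c h X)).resolve_left hcoef
  refine ⟨fun X => ?_, hdτ⟩
  simpa [hdτ] using h X

/-- Lemma 3.1 (i) ⇐ (ii): pointwise formulation on an `n`-dimensional inner product
space `V` (a tangent space of the Riemannian manifold).  `T X Y Z` stands for the
covariant derivative `(∇_X ρ)(Y,Z)` of the symmetric Ricci tensor `ρ`, and `dτ X` for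
the derivative `∇_X τ` of the scalar curvature.  The hypotheses `hdiv` (the contracted
second Bianchi identity `2 div ρ = ∇τ`) and `htr` (`τ = tr ρ`, differentiated) are the
standard facts relating these data.  If `(∇_X ρ)(X,X) + c (∇_X τ)‖X‖² ≡ 0` for some
constant `c ≠ -2/(n+2)`, then `(∇_X ρ)(X,X) ≡ 0` and `∇τ = 0`. -/
theorem cyclic_parallel_of_linear_combination
    {V : Type*} [NormedAddCommGroup V] [InnerProductSpace ℝ V] [FiniteDimensional ℝ V]
    {n : ℕ} (hn : 3 ≤ n) (hdim : Module.finrank ℝ V = n)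
    (b : OrthonormalBasis (Fin n) ℝ V)
    (T : V →ₗ[ℝ] V →ₗ[ℝ] V →ₗ[ℝ] ℝ) (dτ : V →ₗ[ℝ] ℝ)
    (hsymm : ∀ X Y Z : V, T X Y Z = T X Z Y)
    (hdiv : ∀ X : V, 2 * ∑ i, T (b i) (b i) X = dτ X)
    (htr : ∀ X : V, ∑ i, T X (b i) (b i) = dτ X)
    (c : ℝ) (hc : c ≠ -2 / ((n : ℝ) + 2))
    (h : ∀ X : V, T X X X + c * dτ X * ‖X‖ ^ 2 = 0) :
    (∀ X : V, T X X X = 0) ∧ dτ = 0 :=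
  cyclic_parallel_of_linear_combination_general b T dτ hsymm hdiv htr c hc h
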